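/- Let Ω1, Ω2, Ω3 be pairwise commuting n×n complex matrices, Ψ := Ω1² + Ω2² + Ω3², K := [[0, −Ω3, Ω2], [Ω3, 0, −Ω1], [−Ω2, Ω1, 0]] (a 3n×3n block matrix), and Λ := i·K. For t ∈ ℝ set S_t := Σ_{m=0}^∞ (−1)^m t^(2m) Ψ^m/(2m+1)! and C_t := Σ_{m=0}^∞ (−1)^(m+1) t^(2m) Ψ^m/(2m+2)!. Then cos(tΛ) is the block matrix with diagonal blocks I + t²(Ω3²+Ω2²)C_t, I + t²(Ω3²+Ω1²)C_t, I + t²(Ω2²+Ω1²)C_t, and off-diagonal blocks (1,2) = (2,1) = −t²Ω2Ω1C_t, (1,3) = (3,1) = −t²Ω3Ω1C_t, (2,3) = (3,2) = −t²Ω3Ω2C_t; and sin(tΛ) = [[0, −s12, s13], [s12, 0, −s23], [−s13, s23, 0]] with s12 = i t Ω3 S_t, s13 = i t Ω2 S_t, s23 = i t Ω1 S_t. -/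

import Mathlib

open Matrix

/-- The matrix cosine: `cos A = (exp(iA) + exp(-iA))/2`, with `exp` the matrix exponential. -/
noncomputable def matCos {ι : Type*} [Fintype ι] [DecidableEq ι]
    (A : Matrix ι ι ℂ) : Matrix ι ι ℂ :=
  (2 : ℂ)⁻¹ • (NormedSpace.exp (Complex.I • A) + NormedSpace.exp ((-Complex.I) • A))

/-- The matrix sine: `sin A = (exp(iA) - exp(-iA))/(2i)`, with `exp` the matrix exponential. -/
noncomputable def matSin {ι : Type*} [Fintype ι] [DecidableEq ι]
    (A : Matrix ι ι ℂ) : Matrix ι ι ℂ :=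
  (2 * Complex.I)⁻¹ • (NormedSpace.exp (Complex.I • A) - NormedSpace.exp ((-Complex.I) • A))

/-- A `3n × 3n` block matrix built from a `3 × 3` array of `n × n` blocks. -/
def blockMat3 {n : ℕ} {α : Type*} (A : Fin 3 → Fin 3 → Matrix (Fin n) (Fin n) α) :
    Matrix (Fin 3 × Fin n) (Fin 3 × Fin n) α :=
  Matrix.of fun p q => A p.1 q.1 p.2 q.2

/-!
Viewed as a `3 × 3` matrix over the ring of `n × n` matrices, `K` is the matrix of `x ↦ ω × x`
for `ω = (Ω1, Ω2, Ω3)`. As the `Ωi` commute, `K² = ω ωᵀ - Ψ` and `K ω = 0`, hence `K³ = -K Ψ`.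
So the odd and even powers of `A = tK` are `A (-t²Ψ)^m` and `A² (-t²Ψ)^m`, and splitting the
exponential series into its odd and even parts gives `cosh A = 1 + A² C(-t²Ψ)` and
`sinh A = A S(-t²Ψ)` with `S(y) = sinh √y / √y` and `C(y) = (cosh √y - 1) / y`.
Finally `tΛ = i A`, so `cos (tΛ) = cosh A` and `sin (tΛ) = i sinh A`.
-/

open NormedSpace
open scoped Nat

theorem blockMat3_eq_compAlgEquiv {n : ℕ} (𝕜 : Type*) {α : Type*} [CommSemiring 𝕜] [Semiring α]
    [Algebra 𝕜 α] (A : Fin 3 → Fin 3 → Matrix (Fin n) (Fin n) α) :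
    blockMat3 A = compAlgEquiv (Fin 3) (Fin n) α 𝕜 (of A) :=
  rfl

section PowThree

variable {R : Type*} [Ring R] {A Q : R}

theorem pow_two_mul_add_one_of_pow_three (h : A ^ 3 = A * Q) (m : ℕ) :
    A ^ (2 * m + 1) = A * Q ^ m := by
  induction m with
  | zero => simp
  | succ m ih =>
    rw [show 2 * (m + 1) + 1 = 2 + (2 * m + 1) by ring, pow_add, ih, ← mul_assoc, ← pow_succ, h,
      mul_assoc, ← pow_succ']

theorem pow_two_mul_add_two_of_pow_three (h : A ^ 3 = A * Q) (m : ℕ) :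
    A ^ (2 * m + 2) = A ^ 2 * Q ^ m := by
  rw [pow_succ', pow_two_mul_add_one_of_pow_three h, ← mul_assoc, ← sq]

theorem neg_pow_three_of_pow_three (h : A ^ 3 = A * Q) : (-A) ^ 3 = -A * Q := by
  rw [Odd.neg_pow (by decide), h, neg_mul]

theorem smul_pow_three_of_pow_three {𝕜 : Type*} [CommSemiring 𝕜] [Algebra 𝕜 R]
    (h : A ^ 3 = A * Q) (s : 𝕜) : (s • A) ^ 3 = s • A * (s ^ 2 • Q) := by
  rw [smul_pow, h, smul_mul_smul_comm, ← pow_succ']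

end PowThree

section CrossMatrix

variable {R : Type*} [Ring R] {a b c : R}

def crossMatrix (a b c : R) : Matrix (Fin 3) (Fin 3) R := !![0, -c, b; c, 0, -a; -b, a, 0]

theorem crossMatrix_mulVec_self (hab : Commute a b) (hac : Commute a c) (hbc : Commute b c) :
    crossMatrix a b c *ᵥ ![a, b, c] = 0 := by
  ext i
  fin_cases i <;> simp [crossMatrix, Matrix.mulVec, dotProduct, Fin.sum_univ_three, hab.eq,
    hac.eq, hbc.eq]

theorem crossMatrix_sq (hab : Commute a b) (hac : Commute a c) (hbc : Commute b c) :
    crossMatrix a b c ^ 2 =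
      vecMulVec ![a, b, c] ![a, b, c] - scalar (Fin 3) (a ^ 2 + b ^ 2 + c ^ 2) := by
  ext i j
  fin_cases i <;> fin_cases j <;>
    simp [crossMatrix, sq, Matrix.mul_apply, Fin.sum_univ_three, hab.eq, hac.eq, hbc.eq] <;>
    noncomm_ring

theorem crossMatrix_pow_three (hab : Commute a b) (hac : Commute a c) (hbc : Commute b c) :
    crossMatrix a b c ^ 3 = crossMatrix a b c * scalar (Fin 3) (-(a ^ 2 + b ^ 2 + c ^ 2)) := by
  rw [pow_succ', crossMatrix_sq hab hac hbc, mul_sub, mul_vecMulVec,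
    crossMatrix_mulVec_self hab hac hbc, zero_vecMulVec, zero_sub, map_neg, mul_neg]

variable {𝕜 : Type*} [CommRing 𝕜] [Algebra 𝕜 R]

theorem smul_crossMatrix_mul_scalar (s : 𝕜) (S : R) :
    s • (crossMatrix a b c * scalar (Fin 3) S) =
      !![0, -(s • (c * S)), s • (b * S);
        s • (c * S), 0, -(s • (a * S));
        -(s • (b * S)), s • (a * S), 0] := by
  ext i j
  fin_cases i <;> fin_cases j <;> simp [crossMatrix]

theorem one_sub_smul_crossMatrix_sq_mul_scalar (hab : Commute a b) (hac : Commute a c)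
    (hbc : Commute b c) (s : 𝕜) (C : R) :
    1 - s • (crossMatrix a b c ^ 2 * scalar (Fin 3) C) =
      !![1 + s • ((c ^ 2 + b ^ 2) * C), -(s • (b * a * C)), -(s • (c * a * C));
        -(s • (b * a * C)), 1 + s • ((c ^ 2 + a ^ 2) * C), -(s • (c * b * C));
        -(s • (c * a * C)), -(s • (c * b * C)), 1 + s • ((b ^ 2 + a ^ 2) * C)] := by
  rw [crossMatrix_sq hab hac hbc]
  ext i j
  fin_cases i <;> fin_cases j <;> simp [hab.eq, hac.eq, hbc.eq] <;>
    (rw [← sq]; simp only [sub_mul, add_mul, smul_sub, smul_add]; abel)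

end CrossMatrix

section SqrtSeries

variable (𝕂 : Type*) {𝔸 : Type*} [Field 𝕂] [Ring 𝔸] [Algebra 𝕂 𝔸] [TopologicalSpace 𝔸]

/- `sinhcSqrt 𝕂 y = sinh √y / √y` and `coshcSqrt 𝕂 y = (cosh √y - 1) / y`, as power series
in `y`. -/
noncomputable def sinhcSqrt (y : 𝔸) : 𝔸 := ∑' m : ℕ, ((2 * m + 1)! : 𝕂)⁻¹ • y ^ m

noncomputable def coshcSqrt (y : 𝔸) : 𝔸 := ∑' m : ℕ, ((2 * m + 2)! : 𝕂)⁻¹ • y ^ m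

variable {𝕂}

theorem map_tsum_smul_pow {𝔹 : Type*} [Ring 𝔹] [Algebra 𝕂 𝔹] [TopologicalSpace 𝔹] [T2Space 𝔹]
    {F : Type*} [FunLike F 𝔸 𝔹] [AlgHomClass F 𝕂 𝔸 𝔹] (f : F) (hf : Continuous f)
    {a : ℕ → 𝕂} {x : 𝔸} (hx : Summable fun m => a m • x ^ m) :
    f (∑' m, a m • x ^ m) = ∑' m, a m • f x ^ m := by
  simp only [hx.map_tsum f hf, map_smul, map_pow]

theorem sinhcSqrt_neg_sq_smul (s : 𝕂) (x : 𝔸) :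
    sinhcSqrt 𝕂 (-(s ^ 2 • x)) =
      ∑' m : ℕ, ((-1 : 𝕂) ^ m * s ^ (2 * m) * ((2 * m + 1)! : 𝕂)⁻¹) • x ^ m := by
  refine tsum_congr fun m => ?_
  rw [← neg_smul, smul_pow, smul_smul]
  ring_nf

theorem coshcSqrt_neg_sq_smul [IsTopologicalAddGroup 𝔸] [T2Space 𝔸] (s : 𝕂) (x : 𝔸) :
    coshcSqrt 𝕂 (-(s ^ 2 • x)) =
      -∑' m : ℕ, ((-1 : 𝕂) ^ (m + 1) * s ^ (2 * m) * ((2 * m + 2)! : 𝕂)⁻¹) • x ^ m := by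
  rw [← tsum_neg]
  refine tsum_congr fun m => ?_
  rw [← neg_smul, smul_pow, smul_smul, ← neg_smul]
  ring_nf

end SqrtSeries

section Banach

variable {𝕂 𝔸 : Type*} [RCLike 𝕂] [NormedRing 𝔸] [NormedAlgebra 𝕂 𝔸] [CompleteSpace 𝔸]

theorem norm_inv_factorial_le_of_le {m k : ℕ} (h : m ≤ k) : ‖(k ! : 𝕂)⁻¹‖ ≤ (m ! : ℝ)⁻¹ := by
  rw [norm_inv, RCLike.norm_natCast]
  exact inv_anti₀ (by positivity) (by exact_mod_cast Nat.factorial_le h)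

theorem summable_smul_pow_of_norm_le_inv_factorial {a : ℕ → 𝕂}
    (ha : ∀ m, ‖a m‖ ≤ (m ! : ℝ)⁻¹) (x : 𝔸) : Summable fun m => a m • x ^ m := by
  refine .of_norm_bounded (norm_expSeries_summable' (𝕂 := 𝕂) x) fun m => ?_
  rw [norm_smul, norm_smul, norm_inv, RCLike.norm_natCast]
  exact mul_le_mul_of_nonneg_right (ha m) (norm_nonneg _)

theorem summable_sinhcSqrt (x : 𝔸) : Summable fun m : ℕ => ((2 * m + 1)! : 𝕂)⁻¹ • x ^ m :=
  summable_smul_pow_of_norm_le_inv_factorial (fun _ => norm_inv_factorial_le_of_le (by omega)) x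

theorem summable_coshcSqrt (x : 𝔸) : Summable fun m : ℕ => ((2 * m + 2)! : 𝕂)⁻¹ • x ^ m :=
  summable_smul_pow_of_norm_le_inv_factorial (fun _ => norm_inv_factorial_le_of_le (by omega)) x

section Map

variable {𝔹 F : Type*} [Ring 𝔹] [Algebra 𝕂 𝔹] [TopologicalSpace 𝔹] [T2Space 𝔹] [FunLike F 𝔸 𝔹]
  [AlgHomClass F 𝕂 𝔸 𝔹]

theorem map_sinhcSqrt (f : F) (hf : Continuous f) (x : 𝔸) :
    f (sinhcSqrt 𝕂 x) = sinhcSqrt 𝕂 (f x) :=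
  map_tsum_smul_pow f hf (summable_sinhcSqrt x)

theorem map_coshcSqrt (f : F) (hf : Continuous f) (x : 𝔸) :
    f (coshcSqrt 𝕂 x) = coshcSqrt 𝕂 (f x) :=
  map_tsum_smul_pow f hf (summable_coshcSqrt x)

end Map

variable {A Q : 𝔸}

theorem exp_eq_of_pow_three (h : A ^ 3 = A * Q) :
    exp A = 1 + A * sinhcSqrt 𝕂 Q + A ^ 2 * coshcSqrt 𝕂 Q := by
  set f : ℕ → 𝔸 := fun k => ((k ! : 𝕂)⁻¹) • A ^ k
  have hodd : ∀ m, f (2 * m + 1) = A * (((2 * m + 1)! : 𝕂)⁻¹ • Q ^ m) := fun m => by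
    simp only [f, pow_two_mul_add_one_of_pow_three h, mul_smul_comm]
  have heven : ∀ m, f (2 * m + 2) = A ^ 2 * (((2 * m + 2)! : 𝕂)⁻¹ • Q ^ m) := fun m => by
    simp only [f, pow_two_mul_add_two_of_pow_three h, mul_smul_comm]
  have hsum_odd : Summable fun m => f (2 * m + 1) := by
    simpa only [hodd] using (summable_sinhcSqrt Q).mul_left A
  have hsum_even : Summable fun m => f (2 * m + 2) := by
    simpa only [heven] using (summable_coshcSqrt Q).mul_left (A ^ 2)
  calc exp A = f 0 + ∑' k, f (k + 1) :=
        (exp_series_hasSum_exp' A).tsum_eq.symm.trans (expSeries_summable' A).tsum_eq_zero_add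
    _ = 1 + (∑' m, f (2 * m + 1) + ∑' m, f (2 * m + 2)) := by
        congr 1
        · simp only [f, Nat.factorial_zero, Nat.cast_one, inv_one, pow_zero, one_smul]
        · exact (tsum_even_add_odd (f := fun k => f (k + 1)) hsum_odd hsum_even).symm
    _ = 1 + A * sinhcSqrt 𝕂 Q + A ^ 2 * coshcSqrt 𝕂 Q := by
        rw [tsum_congr hodd, tsum_congr heven, (summable_sinhcSqrt Q).tsum_mul_left,
          (summable_coshcSqrt Q).tsum_mul_left, add_assoc, sinhcSqrt, coshcSqrt]

theorem inv_two_smul_exp_add_exp_neg_of_pow_three (h : A ^ 3 = A * Q) :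
    (2 : 𝕂)⁻¹ • (exp A + exp (-A)) = 1 + A ^ 2 * coshcSqrt 𝕂 Q := by
  rw [exp_eq_of_pow_three (𝕂 := 𝕂) h, exp_eq_of_pow_three (𝕂 := 𝕂) (neg_pow_three_of_pow_three h),
    neg_sq, neg_mul]
  module

theorem inv_two_smul_exp_sub_exp_neg_of_pow_three (h : A ^ 3 = A * Q) :
    (2 : 𝕂)⁻¹ • (exp A - exp (-A)) = A * sinhcSqrt 𝕂 Q := by
  rw [exp_eq_of_pow_three (𝕂 := 𝕂) h, exp_eq_of_pow_three (𝕂 := 𝕂) (neg_pow_three_of_pow_three h),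
    neg_sq, neg_mul]
  module

end Banach

section MatrixTrig

variable {ι : Type*} [Fintype ι] [DecidableEq ι] {A Q : Matrix ι ι ℂ}

theorem matCos_I_smul_of_pow_three (h : A ^ 3 = A * Q) :
    matCos (Complex.I • A) = 1 + A ^ 2 * coshcSqrt ℂ Q := by
  rw [matCos, smul_smul, smul_smul, Complex.I_mul_I, neg_mul, Complex.I_mul_I, neg_neg, one_smul,
    neg_one_smul, add_comm]
  open scoped Matrix.Norms.Operator in exact inv_two_smul_exp_add_exp_neg_of_pow_three h

theorem matSin_I_smul_of_pow_three (h : A ^ 3 = A * Q) :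
    matSin (Complex.I • A) = Complex.I • (A * sinhcSqrt ℂ Q) := by
  rw [matSin, smul_smul, smul_smul, Complex.I_mul_I, neg_mul, Complex.I_mul_I, neg_neg, one_smul,
    neg_one_smul, ← neg_sub, smul_neg, ← neg_smul,
    show -(2 * Complex.I)⁻¹ = Complex.I * 2⁻¹ by rw [mul_inv, Complex.inv_I]; ring, mul_smul]
  open scoped Matrix.Norms.Operator in
  exact congrArg _ (inv_two_smul_exp_sub_exp_neg_of_pow_three h)

end MatrixTrig

/-- explicit block formulas for `cos(tΛ)` and `sin(tΛ)` where `Λ = i·K`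
and `K` is the cross-product block matrix of pairwise commuting `Ω1, Ω2, Ω3`
(Proposition 2.2 of the paper). -/
theorem cos_sin_block_formulas {n : ℕ} (Ω1 Ω2 Ω3 : Matrix (Fin n) (Fin n) ℂ)
    (h12 : Ω1 * Ω2 = Ω2 * Ω1) (h13 : Ω1 * Ω3 = Ω3 * Ω1) (h23 : Ω2 * Ω3 = Ω3 * Ω2)
    (t : ℝ)
    (Ψ St Ct : Matrix (Fin n) (Fin n) ℂ)
    (hΨ : Ψ = Ω1 ^ 2 + Ω2 ^ 2 + Ω3 ^ 2)
    (hSt : St = ∑' m : ℕ,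
      ((-1 : ℂ) ^ m * (t : ℂ) ^ (2 * m) * ((Nat.factorial (2 * m + 1) : ℂ))⁻¹) • Ψ ^ m)
    (hCt : Ct = ∑' m : ℕ,
      ((-1 : ℂ) ^ (m + 1) * (t : ℂ) ^ (2 * m) * ((Nat.factorial (2 * m + 2) : ℂ))⁻¹) • Ψ ^ m)
    (K Λ : Matrix (Fin 3 × Fin n) (Fin 3 × Fin n) ℂ)
    (hK : K = blockMat3 ![![0, -Ω3, Ω2], ![Ω3, 0, -Ω1], ![-Ω2, Ω1, 0]])
    (hΛ : Λ = Complex.I • K) :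
    matCos ((t : ℂ) • Λ) = blockMat3
      ![![1 + ((t : ℂ) ^ 2) • ((Ω3 ^ 2 + Ω2 ^ 2) * Ct),
          -(((t : ℂ) ^ 2) • (Ω2 * Ω1 * Ct)),
          -(((t : ℂ) ^ 2) • (Ω3 * Ω1 * Ct))],
        ![-(((t : ℂ) ^ 2) • (Ω2 * Ω1 * Ct)),
          1 + ((t : ℂ) ^ 2) • ((Ω3 ^ 2 + Ω1 ^ 2) * Ct),
          -(((t : ℂ) ^ 2) • (Ω3 * Ω2 * Ct))],
        ![-(((t : ℂ) ^ 2) • (Ω3 * Ω1 * Ct)),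
          -(((t : ℂ) ^ 2) • (Ω3 * Ω2 * Ct)),
          1 + ((t : ℂ) ^ 2) • ((Ω2 ^ 2 + Ω1 ^ 2) * Ct)]] ∧
    matSin ((t : ℂ) • Λ) = blockMat3
      ![![0, -((Complex.I * (t : ℂ)) • (Ω3 * St)), (Complex.I * (t : ℂ)) • (Ω2 * St)],
        ![(Complex.I * (t : ℂ)) • (Ω3 * St), 0, -((Complex.I * (t : ℂ)) • (Ω1 * St))],
        ![-((Complex.I * (t : ℂ)) • (Ω2 * St)), (Complex.I * (t : ℂ)) • (Ω1 * St), 0]] := by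
  simp only [blockMat3_eq_compAlgEquiv ℂ] at hK ⊢
  set e := compAlgEquiv (Fin 3) (Fin n) ℂ ℂ
  let D := e.toAlgHom.comp (scalarAlgHom (Fin 3) ℂ)
  have hD : Continuous D := D.toLinearMap.continuous_of_finiteDimensional
  have hDe : ∀ X, D X = e (scalar (Fin 3) X) := fun _ => rfl
  have harg : (t : ℂ) • Λ = Complex.I • e ((t : ℂ) • crossMatrix Ω1 Ω2 Ω3) := by
    rw [hΛ, hK, smul_comm, ← map_smul, crossMatrix]
  have hcube : e ((t : ℂ) • crossMatrix Ω1 Ω2 Ω3) ^ 3 =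
      e ((t : ℂ) • crossMatrix Ω1 Ω2 Ω3) * D (-((t : ℂ) ^ 2 • Ψ)) := by
    rw [← map_pow, smul_pow_three_of_pow_three (crossMatrix_pow_three h12 h13 h23), map_mul, hΨ]
    simp only [D, AlgHom.comp_apply, AlgEquiv.coe_toAlgHom, scalarAlgHom_apply, map_smul, map_neg,
      smul_neg]
  have hsinhc : sinhcSqrt ℂ (D (-((t : ℂ) ^ 2 • Ψ))) = D St := by
    rw [hSt, ← sinhcSqrt_neg_sq_smul]
    open scoped Matrix.Norms.Operator in exact (map_sinhcSqrt D hD _).symm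
  have hcoshc : coshcSqrt ℂ (D (-((t : ℂ) ^ 2 • Ψ))) = D (-Ct) := by
    rw [hCt, ← coshcSqrt_neg_sq_smul]
    open scoped Matrix.Norms.Operator in exact (map_coshcSqrt D hD _).symm
  rw [harg, matCos_I_smul_of_pow_three hcube, matSin_I_smul_of_pow_three hcube, hsinhc, hcoshc]
  constructor
  · rw [hDe, ← map_pow, ← map_mul, ← map_one e,
      ← map_add, map_neg, mul_neg, ← sub_eq_add_neg, smul_pow, smul_mul_assoc,
      one_sub_smul_crossMatrix_sq_mul_scalar h12 h13 h23]
  · rw [hDe, ← map_mul, ← map_smul, smul_mul_assoc, smul_smul, smul_crossMatrix_mul_scalar]
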